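/- Let R be a ring and A, B unital subrings. For any invertible A-B-submodule X of R there is a unique ring isomorphism σ^X : C_{BR}(B) → C_{AR}(A) such that σ^X(r) x = x r for all r in C_{BR}(B) and x in X. Moreover, if x_i ∈ X and y_i ∈ X⁻¹ (i = 1,…,n) satisfy Σ x_i y_i = 1_A, then σ^X(r) = Σ_{i=1}^n x_i r y_i. -/

import Mathlib

/-!
Fix `xᵢ ∈ X`, `yᵢ ∈ X⁻¹` with `∑ xᵢ yᵢ = 1_A` (possible since `X X⁻¹ = A`) and put
`σ(r) = ∑ xᵢ r yᵢ`. For `r` commuting with `B = X⁻¹ X` one gets `σ(r) x = x r` and `y σ(r) = r y`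
for `x ∈ X`, `y ∈ X⁻¹`; hence `σ(r)` commutes with `A = X X⁻¹`. Conversely every
`s ∈ C_{AR}(A)` is determined by its action on `X`, since `s = s 1_A = ∑ (s xᵢ) yᵢ`. This one
observation gives uniqueness, independence of the chosen `xᵢ, yᵢ`, multiplicativity, and shows
that the same construction for `X⁻¹` is the inverse of `σ`.
-/

open Pointwise

/-- `A` is a unital subring of the (possibly non-unital) ring `R`, with identity element
`oneA` (not necessarily an identity of `R`). -/
structure IsUnitalSubring {R : Type*} [NonUnitalRing R] (A : AddSubgroup R) (oneA : R) : Prop where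
  one_mem : oneA ∈ A
  mul_mem : ∀ ⦃a⦄, a ∈ A → ∀ ⦃b⦄, b ∈ A → a * b ∈ A
  one_mul : ∀ a ∈ A, oneA * a = a
  mul_one : ∀ a ∈ A, a * oneA = a

/-- `X` is an invertible (unital) `A`-`B`-submodule of `R` with inverse `Xinv`:
`X Xinv = A` and `Xinv X = B`, where products denote the additive subgroup generated by
all products (i.e. finite sums of products). -/
structure IsInvertibleSubmodule {R : Type*} [NonUnitalRing R]
    (A B : AddSubgroup R) (oneA oneB : R) (X Xinv : AddSubgroup R) : Prop where
  unitalA : IsUnitalSubring A oneA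
  unitalB : IsUnitalSubring B oneB
  smul_mem : ∀ ⦃a⦄, a ∈ A → ∀ ⦃x⦄, x ∈ X → a * x ∈ X
  mem_smul : ∀ ⦃x⦄, x ∈ X → ∀ ⦃b⦄, b ∈ B → x * b ∈ X
  one_smul : ∀ x ∈ X, oneA * x = x
  smul_one : ∀ x ∈ X, x * oneB = x
  smul_mem' : ∀ ⦃b⦄, b ∈ B → ∀ ⦃y⦄, y ∈ Xinv → b * y ∈ Xinv
  mem_smul' : ∀ ⦃y⦄, y ∈ Xinv → ∀ ⦃a⦄, a ∈ A → y * a ∈ Xinv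
  one_smul' : ∀ y ∈ Xinv, oneB * y = y
  smul_one' : ∀ y ∈ Xinv, y * oneA = y
  mul_inv : X * Xinv = A
  inv_mul : Xinv * X = B

/-- The ring structure on a unital subring of `R`. -/
def IsUnitalSubring.ring {R : Type*} [NonUnitalRing R] {A : AddSubgroup R} {oneA : R}
    (h : IsUnitalSubring A oneA) : Ring A :=
  { (inferInstance : AddCommGroup A) with
    mul := fun a b => ⟨a.1 * b.1, h.mul_mem a.2 b.2⟩
    one := ⟨oneA, h.one_mem⟩
    mul_assoc := fun a b c => Subtype.ext (mul_assoc a.1 b.1 c.1)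
    one_mul := fun a => Subtype.ext (h.one_mul a.1 a.2)
    mul_one := fun a => Subtype.ext (h.mul_one a.1 a.2)
    left_distrib := fun a b c => Subtype.ext (mul_add a.1 b.1 c.1)
    right_distrib := fun a b c => Subtype.ext (add_mul a.1 b.1 c.1)
    zero_mul := fun a => Subtype.ext (zero_mul a.1)
    mul_zero := fun a => Subtype.ext (mul_zero a.1) }


open Pointwise in
/-- The commutant `C_{AR}(A)`: elements of the subring `AR` (finite sums of products `a * r`)
commuting with every element of `A`. -/
def commAR {R : Type*} [NonUnitalRing R] (A : AddSubgroup R) : Set R :=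
  {r : R | r ∈ A * (⊤ : AddSubgroup R) ∧ ∀ a ∈ A, a * r = r * a}

/-- `σ` restricts to a ring isomorphism `C_{BR}(B) → C_{AR}(A)` intertwined by `X`:
`σ(r) x = x r` for all `r ∈ C_{BR}(B)` and `x ∈ X`. -/
def IsMiyashitaIso {R : Type*} [NonUnitalRing R] (A B : AddSubgroup R) (oneA oneB : R)
    (X : AddSubgroup R) (σ : R → R) : Prop :=
  Set.BijOn σ (commAR B) (commAR A) ∧
  (∀ r ∈ commAR B, ∀ r' ∈ commAR B, σ (r + r') = σ r + σ r') ∧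
  (∀ r ∈ commAR B, ∀ r' ∈ commAR B, σ (r * r') = σ r * σ r') ∧
  σ oneB = oneA ∧
  (∀ r ∈ commAR B, ∀ x ∈ X, σ r * x = x * r)

theorem AddSubgroup.exists_fin_sum_mul_eq_of_mem_mul {R : Type*} [NonUnitalRing R]
    {M N : AddSubgroup R} {c : R} (hc : c ∈ M * N) :
    ∃ (n : ℕ) (x y : Fin n → R), (∀ i, x i ∈ M) ∧ (∀ i, y i ∈ N) ∧ ∑ i, x i * y i = c := by
  refine AddSubmonoid.mul_induction_on hc ?_ ?_
  · intro m hm n hn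
    exact ⟨1, fun _ => m, fun _ => n, fun _ => hm, fun _ => hn, by simp⟩
  · rintro a b ⟨n, x, y, hx, hy, rfl⟩ ⟨m, u, v, hu, hv, rfl⟩
    refine ⟨n + m, Fin.append x u, Fin.append y v,
      fun i => Fin.addCases (fun j => by simpa using hx j) (fun j => by simpa using hu j) i,
      fun i => Fin.addCases (fun j => by simpa using hy j) (fun j => by simpa using hv j) i, ?_⟩
    simp only [Fin.sum_univ_add, Fin.append_left, Fin.append_right]

/-- The map `σ^X` of the paper, when `∑ xᵢ yᵢ = 1_A` with `xᵢ ∈ X`, `yᵢ ∈ X⁻¹`. -/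
def conjSum {R : Type*} [NonUnitalRing R] {n : ℕ} (x y : Fin n → R) (r : R) : R :=
  ∑ i, x i * r * y i

theorem conjSum_add {R : Type*} [NonUnitalRing R] {n : ℕ} (x y : Fin n → R) (r r' : R) :
    conjSum x y (r + r') = conjSum x y r + conjSum x y r' := by
  simp only [conjSum, mul_add, add_mul, Finset.sum_add_distrib]

section CommAR

variable {R : Type*} [NonUnitalRing R] {A : AddSubgroup R} {oneA : R}

theorem IsUnitalSubring.one_mul_of_mem_mul_top (hA : IsUnitalSubring A oneA) {s : R}
    (hs : s ∈ A * (⊤ : AddSubgroup R)) : oneA * s = s := by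
  refine AddSubmonoid.mul_induction_on hs (fun a ha t _ => ?_) (fun p q hp hq => ?_)
  · rw [← mul_assoc, hA.one_mul a ha]
  · rw [mul_add, hp, hq]

theorem mul_mem_mul_top {s : R} (hs : s ∈ A * (⊤ : AddSubgroup R)) (t : R) :
    s * t ∈ A * (⊤ : AddSubgroup R) := by
  refine AddSubmonoid.mul_induction_on hs (fun a ha u _ => ?_) (fun p q hp hq => ?_)
  · rw [mul_assoc]
    exact AddSubmonoid.mul_mem_mul ha (AddSubgroup.mem_top _)
  · rw [add_mul]
    exact add_mem hp hq

theorem mul_mem_commAR {s s' : R} (hs : s ∈ commAR A) (hs' : s' ∈ commAR A) :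
    s * s' ∈ commAR A :=
  ⟨mul_mem_mul_top hs.1 s', fun a ha => by
    rw [← mul_assoc, hs.2 a ha, mul_assoc, hs'.2 a ha, mul_assoc]⟩

theorem IsUnitalSubring.mul_one_of_mem_commAR (hA : IsUnitalSubring A oneA) {s : R}
    (hs : s ∈ commAR A) : s * oneA = s :=
  (hs.2 oneA hA.one_mem).symm.trans (hA.one_mul_of_mem_mul_top hs.1)

theorem IsUnitalSubring.eq_conjSum_of_mul_eq (hA : IsUnitalSubring A oneA) {X : AddSubgroup R}
    {n : ℕ} {x y : Fin n → R} (hx : ∀ i, x i ∈ X) (hsum : ∑ i, x i * y i = oneA) {s r : R}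
    (hs : s ∈ commAR A) (hsr : ∀ x' ∈ X, s * x' = x' * r) : s = conjSum x y r :=
  calc s = s * ∑ i, x i * y i := by rw [hsum, hA.mul_one_of_mem_commAR hs]
    _ = conjSum x y r := by
        simp only [conjSum, Finset.mul_sum, ← mul_assoc, hsr _ (hx _)]

end CommAR

namespace IsInvertibleSubmodule

variable {R : Type*} [NonUnitalRing R] {A B : AddSubgroup R} {oneA oneB : R}
  {X Xinv : AddSubgroup R} {n : ℕ} {x y : Fin n → R}

theorem symm (h : IsInvertibleSubmodule A B oneA oneB X Xinv) :
    IsInvertibleSubmodule B A oneB oneA Xinv X :=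
  ⟨h.unitalB, h.unitalA, h.smul_mem', h.mem_smul', h.one_smul', h.smul_one',
   h.smul_mem, h.mem_smul, h.one_smul, h.smul_one, h.inv_mul, h.mul_inv⟩

theorem mem_mul_top (h : IsInvertibleSubmodule A B oneA oneB X Xinv) {x' : R} (hx' : x' ∈ X) :
    x' ∈ A * (⊤ : AddSubgroup R) :=
  h.one_smul x' hx' ▸ AddSubmonoid.mul_mem_mul h.unitalA.one_mem (AddSubgroup.mem_top x')

theorem conjSum_one (h : IsInvertibleSubmodule A B oneA oneB X Xinv) (hx : ∀ i, x i ∈ X)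
    (hsum : ∑ i, x i * y i = oneA) : conjSum x y oneB = oneA := by
  simp only [conjSum, fun i => h.smul_one (x i) (hx i), hsum]

theorem conjSum_mul_eq (h : IsInvertibleSubmodule A B oneA oneB X Xinv)
    (hy : ∀ i, y i ∈ Xinv) (hsum : ∑ i, x i * y i = oneA) {r : R}
    (hr : ∀ b ∈ B, b * r = r * b) {x' : R} (hx' : x' ∈ X) :
    conjSum x y r * x' = x' * r := by
  have hB : ∀ i, y i * x' ∈ B := fun i => h.inv_mul ▸ AddSubmonoid.mul_mem_mul (hy i) hx'
  calc conjSum x y r * x' = ∑ i, x i * ((y i * x') * r) := by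
        simp only [conjSum, Finset.sum_mul, ← hr _ (hB _), mul_assoc]
    _ = (∑ i, x i * y i) * x' * r := by
        simp only [Finset.sum_mul, mul_assoc]
    _ = x' * r := by rw [hsum, h.one_smul x' hx']

theorem mul_conjSum_eq (h : IsInvertibleSubmodule A B oneA oneB X Xinv)
    (hx : ∀ i, x i ∈ X) (hsum : ∑ i, x i * y i = oneA) {r : R}
    (hr : ∀ b ∈ B, b * r = r * b) {y' : R} (hy' : y' ∈ Xinv) :
    y' * conjSum x y r = r * y' := by
  have hB : ∀ i, y' * x i ∈ B := fun i => h.inv_mul ▸ AddSubmonoid.mul_mem_mul hy' (hx i)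
  calc y' * conjSum x y r = ∑ i, r * (y' * x i) * y i := by
        simp only [conjSum, Finset.mul_sum, ← hr _ (hB _), mul_assoc]
    _ = r * (y' * ∑ i, x i * y i) := by
        simp only [Finset.mul_sum, mul_assoc]
    _ = r * y' := by rw [hsum, h.smul_one' y' hy']

theorem conjSum_mem_commAR (h : IsInvertibleSubmodule A B oneA oneB X Xinv)
    (hx : ∀ i, x i ∈ X) (hy : ∀ i, y i ∈ Xinv) (hsum : ∑ i, x i * y i = oneA) {r : R}
    (hr : ∀ b ∈ B, b * r = r * b) : conjSum x y r ∈ commAR A := by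
  refine ⟨sum_mem fun i _ => mul_mem_mul_top (mul_mem_mul_top (h.mem_mul_top (hx i)) r) _,
    fun a ha => ?_⟩
  rw [← h.mul_inv] at ha
  refine AddSubmonoid.mul_induction_on ha (fun x' hx' y' hy' => ?_) (fun p q hp hq => ?_)
  · rw [mul_assoc, h.mul_conjSum_eq hx hsum hr hy', ← mul_assoc,
      ← h.conjSum_mul_eq hy hsum hr hx', mul_assoc]
  · rw [add_mul, mul_add, hp, hq]

theorem isMiyashitaIso_conjSum (h : IsInvertibleSubmodule A B oneA oneB X Xinv)
    (hx : ∀ i, x i ∈ X) (hy : ∀ i, y i ∈ Xinv) (hsum : ∑ i, x i * y i = oneA) :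
    IsMiyashitaIso A B oneA oneB X (conjSum x y) := by
  obtain ⟨m, u, v, hu, hv, hsum'⟩ :=
    AddSubgroup.exists_fin_sum_mul_eq_of_mem_mul (h.inv_mul ▸ h.unitalB.one_mem)
  have hmaps : Set.MapsTo (conjSum x y) (commAR B) (commAR A) := fun r hr =>
    h.conjSum_mem_commAR hx hy hsum hr.2
  have hmaps' : Set.MapsTo (conjSum u v) (commAR A) (commAR B) := fun s hs =>
    h.symm.conjSum_mem_commAR hu hv hsum' hs.2
  have hinv : Set.InvOn (conjSum u v) (conjSum x y) (commAR B) (commAR A) :=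
    ⟨fun r hr => (h.unitalB.eq_conjSum_of_mul_eq hu hsum' hr fun y' hy' =>
        (h.mul_conjSum_eq hx hsum hr.2 hy').symm).symm,
      fun s hs => (h.unitalA.eq_conjSum_of_mul_eq hx hsum hs fun x' hx' =>
        (h.symm.mul_conjSum_eq hu hsum' hs.2 hx').symm).symm⟩
  refine ⟨hinv.bijOn hmaps hmaps', fun r _ r' _ => conjSum_add x y r r', fun r hr r' hr' => ?_,
    h.conjSum_one hx hsum, fun r hr x' hx' => h.conjSum_mul_eq hy hsum hr.2 hx'⟩
  refine (h.unitalA.eq_conjSum_of_mul_eq hx hsum (mul_mem_commAR (hmaps hr) (hmaps hr'))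
    fun x' hx' => ?_).symm
  rw [mul_assoc, h.conjSum_mul_eq hy hsum hr'.2 hx', ← mul_assoc,
    h.conjSum_mul_eq hy hsum hr.2 hx', mul_assoc]

end IsInvertibleSubmodule

theorem IsMiyashitaIso.eqOn_conjSum {R : Type*} [NonUnitalRing R] {A B : AddSubgroup R}
    {oneA oneB : R} {X : AddSubgroup R} {σ : R → R}
    (hσ : IsMiyashitaIso A B oneA oneB X σ) (hA : IsUnitalSubring A oneA)
    {n : ℕ} {x y : Fin n → R} (hx : ∀ i, x i ∈ X) (hsum : ∑ i, x i * y i = oneA) :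
    Set.EqOn σ (conjSum x y) (commAR B) := fun r hr =>
  hA.eq_conjSum_of_mul_eq hx hsum (hσ.1.mapsTo hr) (hσ.2.2.2.2 r hr)

/-- For an invertible `A`-`B`-submodule `X` of `R` there is a unique ring
isomorphism `σ^X : C_{BR}(B) → C_{AR}(A)` with `σ^X(r) x = x r` for `r ∈ C_{BR}(B)`, `x ∈ X`;
moreover if `∑ xᵢ yᵢ = 1_A` with `xᵢ ∈ X`, `yᵢ ∈ X⁻¹`, then `σ^X(r) = ∑ xᵢ r yᵢ`. -/
theorem exists_unique_miyashitaIso {R : Type*} [NonUnitalRing R]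
    (A B : AddSubgroup R) (oneA oneB : R) (X Xinv : AddSubgroup R)
    (h : IsInvertibleSubmodule A B oneA oneB X Xinv) :
    ∃ σ : R → R, IsMiyashitaIso A B oneA oneB X σ ∧
      (∀ σ' : R → R, IsMiyashitaIso A B oneA oneB X σ' →
        Set.EqOn σ' σ (commAR B)) ∧
      ∀ (n : ℕ) (x y : Fin n → R), (∀ i, x i ∈ X) → (∀ i, y i ∈ Xinv) →
        (∑ i, x i * y i) = oneA →
        ∀ r ∈ commAR B, σ r = ∑ i, x i * r * y i := by
  obtain ⟨n, x, y, hx, hy, hsum⟩ :=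
    AddSubgroup.exists_fin_sum_mul_eq_of_mem_mul (h.mul_inv ▸ h.unitalA.one_mem)
  have hσ := h.isMiyashitaIso_conjSum hx hy hsum
  exact ⟨conjSum x y, hσ, fun σ' hσ' => hσ'.eqOn_conjSum h.unitalA hx hsum,
    fun _ x' _ hx' _ hsum' => hσ.eqOn_conjSum h.unitalA hx' hsum'⟩
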